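/- arXiv:2602.15797 — 5 statements merged into one kernel-verified Lean document; each statement's English description precedes it below -/
import Mathlib

section
/- Let p be a prime, S ⊆ ℤ_p, and m ≤ |S| a positive integer. If R ⊆ S is a uniformly random subset of S of size m, then for every z ∈ ℤ_p, the probability that the sum of elements of R equals z is at most 1/(|S| - m + 1). -/
/-!
Double count the pairs `(T, R)` with `T ⊂ R`, `#T = m - 1` and `R` one of the `m`-subsets of `S`
summing to `z`. Each such `R` has `m` subsets `T`, while each `T` lies in at most one such `R`,
namely `insert (z - Σ T) T`. Hence (number of good `R`) `· m ≤ C(|S|, m - 1)`, and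
`C(|S|, m) · m = C(|S|, m - 1) · (|S| - m + 1)` turns this into the claimed bound.
-/

/-- The probability that a uniformly random subset `R ⊆ S` of size `m` has `Σ(R) = z`,
computed as a ratio of counts. -/
noncomputable def probSum (p : ℕ) (S : Finset (ZMod p)) (m : ℕ) (z : ZMod p) : ℝ :=
  (((S.powersetCard m).filter fun R => ∑ x ∈ R, x = z).card : ℝ) /
    ((S.powersetCard m).card : ℝ)

open Finset

section SubsetSums

variable {G : Type*} [AddCommGroup G] [DecidableEq G]

theorem Finset.eq_insert_sub_sum_of_subset {T R : Finset G} {z : G} (hTR : T ⊆ R)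
    (hcard : #T + 1 = #R) (hsum : ∑ x ∈ R, x = z) : R = insert (z - ∑ x ∈ T, x) T := by
  obtain ⟨a, haT, rfl⟩ := exists_eq_insert_iff.mpr ⟨hTR, hcard⟩
  rw [sum_insert haT] at hsum
  rw [← hsum, add_sub_cancel_right]

theorem card_filter_powersetCard_sum_eq_mul_succ_le (S : Finset G) (k : ℕ) (z : G) :
    #{R ∈ S.powersetCard (k + 1) | ∑ x ∈ R, x = z} * (k + 1) ≤ (#S).choose k := by
  rw [← card_powersetCard, ← mul_one #(S.powersetCard k)]
  refine card_mul_le_card_mul (fun R T => T ⊆ R) (fun R hR => ?_) (fun T hT => ?_)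
  · obtain ⟨hRS, hRcard⟩ := mem_powersetCard.mp (mem_filter.mp hR).1
    have habove : (S.powersetCard k).bipartiteAbove (fun R T => T ⊆ R) R = R.powersetCard k := by
      ext T
      simp only [mem_bipartiteAbove, mem_powersetCard]
      exact ⟨fun ⟨⟨_, hT⟩, hTR⟩ => ⟨hTR, hT⟩, fun ⟨hTR, hT⟩ => ⟨⟨hTR.trans hRS, hT⟩, hTR⟩⟩
    rw [habove, card_powersetCard, hRcard, Nat.choose_succ_self_right]
  · have hTcard := (mem_powersetCard.mp hT).2
    refine card_le_one.mpr fun R hR R' hR' => ?_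
    simp only [mem_bipartiteBelow, mem_filter, mem_powersetCard] at hR hR'
    rw [eq_insert_sub_sum_of_subset hR.2 (by omega) hR.1.2,
      eq_insert_sub_sum_of_subset hR'.2 (by omega) hR'.1.2]

theorem card_filter_powersetCard_sum_eq_mul_le_choose (S : Finset G) (k : ℕ) (z : G) :
    #{R ∈ S.powersetCard (k + 1) | ∑ x ∈ R, x = z} * (#S - k) ≤ (#S).choose (k + 1) := by
  refine Nat.le_of_mul_le_mul_right ?_ k.succ_pos
  calc #{R ∈ S.powersetCard (k + 1) | ∑ x ∈ R, x = z} * (#S - k) * (k + 1)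
      = #{R ∈ S.powersetCard (k + 1) | ∑ x ∈ R, x = z} * (k + 1) * (#S - k) := by ring
    _ ≤ (#S).choose k * (#S - k) :=
      Nat.mul_le_mul_right _ (card_filter_powersetCard_sum_eq_mul_succ_le S k z)
    _ = (#S).choose (k + 1) * (k + 1) := (Nat.choose_succ_right_eq _ _).symm

end SubsetSums

theorem stmt5_general (p : ℕ) (S : Finset (ZMod p)) (m : ℕ)
    (hm : 0 < m) (hmS : m ≤ S.card) (z : ZMod p) :
    probSum p S m z ≤ 1 / ((S.card : ℝ) - m + 1) := by
  obtain ⟨k, rfl⟩ := Nat.exists_eq_add_of_lt hm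
  rw [zero_add] at hmS ⊢
  have hgap : ((#S : ℝ) - (k + 1 : ℕ) + 1) = ((#S - k : ℕ) : ℝ) := by
    push_cast [Nat.cast_sub (k.le_succ.trans hmS)]
    ring
  have hgap_pos : 0 < #S - k := by omega
  rw [probSum, card_powersetCard, hgap,
    div_le_div_iff₀ (by exact_mod_cast Nat.choose_pos hmS) (by exact_mod_cast hgap_pos), one_mul]
  exact_mod_cast card_filter_powersetCard_sum_eq_mul_le_choose S k z

theorem stmt5 (p : ℕ) [Fact p.Prime] (S : Finset (ZMod p)) (m : ℕ)
    (hm : 0 < m) (hmS : m ≤ S.card) (z : ZMod p) :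
    probSum p S m z ≤ 1 / ((S.card : ℝ) - m + 1) :=
  stmt5_general p S m hm hmS z
end

section
/- Let t be a positive integer and δ > 0. Let p be a prime, S ⊆ ℤ_p finite, m a positive integer, and define Ψ(χ) = (m/|S|^2)·Σ_{x,x'∈S} ||χx - χx'||_p^2 and B_t = {χ ∈ ℤ_p : Ψ(χ) ≤ t}, and Q_{t,δ} = {x ∈ ℤ_p : Σ_{χ∈B_t} ||χx||_p^2 < δ|B_t|}. Then for any positive integer k, the k-fold sumset kQ_{t,δ} is contained in Q_{t, k^2·δ}. -/
open scoped Classical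

/-- For `x ∈ ℤ_p`, the distance of `y/p` to the nearest integer, where `y` represents `x`. -/
noncomputable def pDist (p : ℕ) (x : ZMod p) : ℝ :=
  |(x.val : ℝ) / p - round ((x.val : ℝ) / p)|

/-- `Ψ(χ) = (m/|S|²) · Σ_{x,x'∈S} ‖χx - χx'‖_p²`. -/
noncomputable def Psi (p : ℕ) (S : Finset (ZMod p)) (m : ℕ) (χ : ZMod p) : ℝ :=
  (m : ℝ) / (S.card : ℝ) ^ 2 * ∑ x ∈ S, ∑ x' ∈ S, pDist p (χ * x - χ * x') ^ 2

/-- `B_t = {χ ∈ ℤ_p : Ψ(χ) ≤ t}`. -/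
noncomputable def Bt (p : ℕ) [NeZero p] (S : Finset (ZMod p)) (m : ℕ) (t : ℝ) :
    Finset (ZMod p) :=
  Finset.univ.filter fun χ => Psi p S m χ ≤ t

/-- `Q_{t,δ} = {x ∈ ℤ_p : Σ_{χ∈B_t} ‖χx‖_p² < δ|B_t|}`. -/
noncomputable def Qt (p : ℕ) [NeZero p] (S : Finset (ZMod p)) (m : ℕ) (t δ : ℝ) :
    Finset (ZMod p) :=
  Finset.univ.filter fun x => ∑ χ ∈ Bt p S m t, pDist p (χ * x) ^ 2 < δ * (Bt p S m t).card

/-- The `k`-fold sumset `kA = {a_1 + ⋯ + a_k : a_1, …, a_k ∈ A}`. -/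
noncomputable def kfoldSumset (p : ℕ) [NeZero p] (k : ℕ) (A : Finset (ZMod p)) :
    Finset (ZMod p) :=
  (Fintype.piFinset fun _ : Fin k => A).image fun f => ∑ i, f i

/-!
`‖x‖_p` is the norm of `x / p` in `ℝ/ℤ`, and `j ↦ j / p` is an additive embedding of `ℤ_p` into
`ℝ/ℤ`, so `‖·‖_p` is subadditive. With Cauchy–Schwarz this gives
`‖χ(x₁ + ⋯ + x_k)‖_p² ≤ k Σᵢ ‖χxᵢ‖_p²`; summing over `χ ∈ B_t`, each `xᵢ ∈ Q_{t,δ}` contributes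
less than `δ|B_t|`, for a total below `k²δ|B_t|`.
-/

open Finset

section pDist

variable {p : ℕ} [NeZero p]

lemma pDist_eq_norm_toAddCircle (x : ZMod p) : pDist p x = ‖ZMod.toAddCircle x‖ := by
  rw [ZMod.toAddCircle_apply, UnitAddCircle.norm_eq, pDist]

lemma pDist_sum_le {ι : Type*} (s : Finset ι) (g : ι → ZMod p) :
    pDist p (∑ i ∈ s, g i) ≤ ∑ i ∈ s, pDist p (g i) := by
  simpa only [pDist_eq_norm_toAddCircle, map_sum] using
    norm_sum_le s fun i => ZMod.toAddCircle (g i)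

lemma pDist_sum_sq_le_card_mul {ι : Type*} (s : Finset ι) (g : ι → ZMod p) :
    pDist p (∑ i ∈ s, g i) ^ 2 ≤ #s * ∑ i ∈ s, pDist p (g i) ^ 2 := by
  have hnonneg : 0 ≤ pDist p (∑ i ∈ s, g i) := abs_nonneg _
  calc pDist p (∑ i ∈ s, g i) ^ 2 ≤ (∑ i ∈ s, pDist p (g i)) ^ 2 :=
        pow_le_pow_left₀ hnonneg (pDist_sum_le s g) 2
    _ ≤ #s * ∑ i ∈ s, pDist p (g i) ^ 2 := sq_sum_le_card_mul_sum_sq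

lemma sum_pDist_mul_sum_sq_lt {ι : Type*} (B : Finset (ZMod p)) {s : Finset ι}
    (hs : s.Nonempty) (f : ι → ZMod p) {c : ℝ}
    (hf : ∀ i ∈ s, ∑ χ ∈ B, pDist p (χ * f i) ^ 2 < c) :
    ∑ χ ∈ B, pDist p (χ * ∑ i ∈ s, f i) ^ 2 < #s ^ 2 * c := by
  calc ∑ χ ∈ B, pDist p (χ * ∑ i ∈ s, f i) ^ 2
      ≤ ∑ χ ∈ B, #s * ∑ i ∈ s, pDist p (χ * f i) ^ 2 := by
        gcongr with χ
        rw [mul_sum]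
        exact pDist_sum_sq_le_card_mul s _
    _ = #s * ∑ i ∈ s, ∑ χ ∈ B, pDist p (χ * f i) ^ 2 := by rw [← mul_sum, sum_comm]
    _ < #s * ∑ _i ∈ s, c := by gcongr with i hi; exact hf i hi
    _ = #s ^ 2 * c := by rw [sum_const, nsmul_eq_mul]; ring

end pDist

lemma mem_kfoldSumset {p : ℕ} [NeZero p] {k : ℕ} {A : Finset (ZMod p)} {x : ZMod p} :
    x ∈ kfoldSumset p k A ↔ ∃ f : Fin k → ZMod p, (∀ i, f i ∈ A) ∧ ∑ i, f i = x := by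
  simp only [kfoldSumset, mem_image, Fintype.mem_piFinset]

theorem stmt8_general (p : ℕ) [Fact p.Prime] (S : Finset (ZMod p)) (m : ℕ)
    (t : ℕ) (δ : ℝ) (k : ℕ) (hk : 0 < k) :
    kfoldSumset p k (Qt p S m t δ) ⊆ Qt p S m t ((k : ℝ) ^ 2 * δ) := by
  intro x hx
  obtain ⟨f, hfQ, rfl⟩ := mem_kfoldSumset.mp hx
  simp only [Qt, mem_filter, mem_univ, true_and] at hfQ ⊢
  have hk' : (univ : Finset (Fin k)).Nonempty := univ_nonempty_iff.mpr ⟨⟨0, hk⟩⟩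
  simpa [mul_assoc] using sum_pDist_mul_sum_sq_lt _ hk' f fun i _ => hfQ i

theorem stmt8 (p : ℕ) [Fact p.Prime] (S : Finset (ZMod p)) (m : ℕ) (hm : 0 < m)
    (t : ℕ) (ht : 0 < t) (δ : ℝ) (hδ : 0 < δ) (k : ℕ) (hk : 0 < k) :
    kfoldSumset p k (Qt p S m t δ) ⊆ Qt p S m t ((k : ℝ) ^ 2 * δ) :=
  stmt8_general p S m t δ k hk
end

section
/- Let p be a prime, S ⊆ ℤ_p finite, m a positive integer, Ψ(χ) = (m/|S|^2)·Σ_{x,x'∈S} ||χx - χx'||_p^2, and B_t = {χ ∈ ℤ_p : Ψ(χ) ≤ t}. Define Q_{t,δ} = {x ∈ ℤ_p : Σ_{χ∈B_t} ||χx||_p^2 < δ|B_t|}. Then |Q_{t,1/200}| ≤ (5/4)·p/|B_t|. -/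
open scoped Classical

open Complex in
lemma re_stdAddChar_ge (p : ℕ) [NeZero p] (a : ZMod p) :
    1 - 2 * Real.pi ^ 2 * pDist p a ^ 2 ≤ (ZMod.stdAddChar a).re := by
  have h1 : ZMod.stdAddChar a = Complex.exp (2 * Real.pi * I * (a.val : ℕ) / p) := by
    rw [ZMod.stdAddChar_apply, ZMod.toCircle_apply]
  unfold pDist
  obtain ⟨n, hn⟩ : ∃ n : ℕ, a.val = n := ⟨_, rfl⟩
  rw [hn] at h1 ⊢
  have h2 : (2 * (Real.pi : ℂ) * I * (n : ℕ) / p) = ((2 * Real.pi * n / p : ℝ) : ℂ) * I := by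
    push_cast
    ring
  rw [h1, h2, Complex.exp_ofReal_mul_I_re]
  obtain ⟨y, hy⟩ : ∃ y : ℝ, (n : ℝ) / p = y := ⟨_, rfl⟩
  obtain ⟨r, hr⟩ : ∃ r : ℤ, round y = r := ⟨_, rfl⟩
  obtain ⟨d, hd⟩ : ∃ d : ℝ, y - r = d := ⟨_, rfl⟩
  rw [hy, hr]
  have hp0 : (p : ℝ) ≠ 0 := Nat.cast_ne_zero.mpr (NeZero.ne p)
  have harg : 2 * Real.pi * (n : ℝ) / p = 2 * Real.pi * d + r * (2 * Real.pi) := by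
    rw [← hd, ← hy]; field_simp; ring
  rw [harg, Real.cos_add_int_mul_two_pi]
  rw [hd]
  have hb := Real.one_sub_sq_div_two_le_cos (x := 2 * Real.pi * d)
  have hexp : (2 * Real.pi * d) ^ 2 = 4 * Real.pi ^ 2 * d ^ 2 := by ring
  simp only [_root_.sq_abs]
  linarith

lemma zero_mem_Bt (p : ℕ) [NeZero p] (S : Finset (ZMod p)) (m : ℕ) (t : ℝ) (ht : 0 ≤ t) :
    (0 : ZMod p) ∈ Bt p S m t := by
  simp only [Bt, Finset.mem_filter, Finset.mem_univ, true_and]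
  have : Psi p S m 0 = 0 := by
    simp [Psi, pDist]
  rw [this]; exact ht

set_option maxHeartbeats 1000000 in
theorem stmt9 (p : ℕ) [Fact p.Prime] (S : Finset (ZMod p)) (m : ℕ) (hm : 0 < m)
    (t : ℕ) (ht : 0 < t) :
    ((Qt p S m t (1 / 200)).card : ℝ) ≤ 5 / 4 * p / ((Bt p S m t).card : ℝ) := by
  set B := Bt p S m t with hB
  set Q := Qt p S m t (1 / 200) with hQ
  set ψ : AddChar (ZMod p) ℂ := ZMod.stdAddChar with hψ
  set F : ZMod p → ℂ := fun x => ∑ χ ∈ B, ψ (χ * x) with hF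
  have hconj : ∀ a : ZMod p, (starRingEnd ℂ) (ψ a) = ψ (-a) := by
    intro a
    rw [hψ, ZMod.stdAddChar_apply, ZMod.stdAddChar_apply, ← Circle.coe_inv_eq_conj,
      ← AddChar.map_neg_eq_inv]
  have hBpos : 0 < (B.card : ℝ) := by
    have : (0 : ZMod p) ∈ B := zero_mem_Bt p S m t (by positivity)
    exact_mod_cast Finset.card_pos.mpr ⟨0, this⟩
  -- orthogonality
  have key : ∑ x : ZMod p, (Complex.normSq (F x) : ℝ) = (B.card : ℝ) * p := by
    have keyC : ∑ x : ZMod p, ((Complex.normSq (F x) : ℝ) : ℂ) = ((B.card : ℝ) * p : ℂ) := by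
      have step : ∀ x : ZMod p, ((Complex.normSq (F x) : ℝ) : ℂ)
          = ∑ χ ∈ B, ∑ χ' ∈ B, ψ ((χ' - χ) * x) := by
        intro x
        rw [Complex.normSq_eq_conj_mul_self, hF]
        rw [map_sum, Finset.sum_mul_sum]
        refine Finset.sum_congr rfl fun χ _ => Finset.sum_congr rfl fun χ' _ => ?_
        rw [hconj, ← AddChar.map_add_eq_mul]
        congr 1
        ring
      have horth : ∀ χ χ' : ZMod p, ∑ x : ZMod p, ψ ((χ' - χ) * x)
          = if χ' = χ then (p : ℂ) else 0 := by
        intro χ χ'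
        have h := AddChar.sum_mulShift (R := ZMod p) (R' := ℂ) (χ' - χ)
          (ZMod.isPrimitive_stdAddChar p)
        simp_rw [mul_comm] at h ⊢
        rw [hψ, h]
        simp only [sub_eq_zero, ZMod.card, apply_ite (fun n : ℕ => (n : ℂ)), Nat.cast_zero]
      calc ∑ x : ZMod p, ((Complex.normSq (F x) : ℝ) : ℂ)
          = ∑ x : ZMod p, ∑ χ ∈ B, ∑ χ' ∈ B, ψ ((χ' - χ) * x) :=
            Finset.sum_congr rfl fun x _ => step x
        _ = ∑ χ ∈ B, ∑ χ' ∈ B, ∑ x : ZMod p, ψ ((χ' - χ) * x) := by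
            rw [Finset.sum_comm]
            exact Finset.sum_congr rfl fun χ _ => Finset.sum_comm
        _ = ∑ χ ∈ B, ∑ χ' ∈ B, (if χ' = χ then (p : ℂ) else 0) :=
            Finset.sum_congr rfl fun χ _ => Finset.sum_congr rfl fun χ' _ => horth χ χ'
        _ = ∑ χ ∈ B, (p : ℂ) := by
            refine Finset.sum_congr rfl fun χ hχ => ?_
            rw [Finset.sum_ite_eq' B χ (fun _ => (p : ℂ))]
            simp [hχ]
        _ = ((B.card : ℝ) * p : ℂ) := by push_cast [Finset.sum_const]; ring
    exact_mod_cast congrArg Complex.re keyC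
  -- lower bound on Q
  have hπlt : Real.pi < 3.15 := Real.pi_lt_d2
  have hπgt : 3 < Real.pi := by linarith [Real.pi_gt_d6]
  have lower : ∀ x ∈ Q, 4 / 5 * (B.card : ℝ) ^ 2 ≤ Complex.normSq (F x) := by
    intro x hx
    have hxQ : ∑ χ ∈ B, pDist p (χ * x) ^ 2 < 1 / 200 * (B.card : ℝ) := by
      simpa [hQ, Qt, hB] using hx
    have hre : (F x).re = ∑ χ ∈ B, (ψ (χ * x)).re := by
      rw [hF]; exact Complex.re_sum B _
    have hre_ge : (1 - Real.pi ^ 2 / 100) * (B.card : ℝ) ≤ (F x).re := by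
      rw [hre]
      have : ∑ χ ∈ B, (1 - 2 * Real.pi ^ 2 * pDist p (χ * x) ^ 2)
          ≤ ∑ χ ∈ B, (ψ (χ * x)).re :=
        Finset.sum_le_sum fun χ _ => re_stdAddChar_ge p (χ * x)
      rw [Finset.sum_sub_distrib, Finset.sum_const, ← Finset.mul_sum] at this
      have h2 : 2 * Real.pi ^ 2 * ∑ χ ∈ B, pDist p (χ * x) ^ 2
          ≤ 2 * Real.pi ^ 2 * (1 / 200 * (B.card : ℝ)) := by
        have hp2 : (0 : ℝ) ≤ 2 * Real.pi ^ 2 := by positivity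
        exact mul_le_mul_of_nonneg_left hxQ.le hp2
      simp only [nsmul_eq_mul, mul_one] at this
      nlinarith
    have hc : (0 : ℝ) ≤ 1 - Real.pi ^ 2 / 100 := by nlinarith
    have hsq : (F x).re ^ 2 ≤ Complex.normSq (F x) := by
      rw [Complex.normSq_apply]; nlinarith [sq_nonneg (F x).im]
    have h1 : ((1 - Real.pi ^ 2 / 100) * (B.card : ℝ)) ^ 2 ≤ (F x).re ^ 2 :=
      pow_le_pow_left₀ (mul_nonneg hc hBpos.le) hre_ge 2
    have hπ2 : Real.pi ^ 2 ≤ 9.9225 := by nlinarith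
    have hcsq : 4 / 5 ≤ (1 - Real.pi ^ 2 / 100) ^ 2 := by nlinarith
    have h2 := mul_le_mul_of_nonneg_right hcsq (sq_nonneg (B.card : ℝ))
    rw [mul_pow] at h1
    linarith
  -- combine
  have sum_ge : (Q.card : ℝ) * (4 / 5 * (B.card : ℝ) ^ 2) ≤ ∑ x : ZMod p, Complex.normSq (F x) := by
    calc (Q.card : ℝ) * (4 / 5 * (B.card : ℝ) ^ 2)
        = ∑ _x ∈ Q, 4 / 5 * (B.card : ℝ) ^ 2 := by rw [Finset.sum_const, nsmul_eq_mul]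
      _ ≤ ∑ x ∈ Q, Complex.normSq (F x) := Finset.sum_le_sum lower
      _ ≤ ∑ x : ZMod p, Complex.normSq (F x) := by
          refine Finset.sum_le_sum_of_subset_of_nonneg (Finset.subset_univ Q)
            fun x _ _ => Complex.normSq_nonneg _
  rw [key] at sum_ge
  rw [le_div_iff₀ hBpos]
  nlinarith [sum_ge, hBpos, Nat.cast_nonneg (α := ℝ) Q.card]
end

section
/- Let k be a positive integer, C > 0 a constant, p a prime, and S ⊆ ℤ_p with |S| ≥ 2. Set m_0 = 0 and m_{k+1} = |S|. Then the sum over all k-tuples of integers 1 ≤ m_1 < ... < m_k < |S| of Σ_{j=0}^{k} Π_{i∈{0,...,k}\{j}} (1/p + C·√(log|S|)/(|S|·√(m_{i+1} - m_i))) is at most (k+1)·(|S|/p + 2C·√(log|S|)/√|S|)^k. -/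
/-!
Fix the omitted index `j`. On increasing tuples, `m ↦ (m_{i+1} - m_i)_{i ≠ j}` is injective: the
`k + 1` gaps sum to `|S|`, so the remaining gap is determined, and the gaps determine `m` by partial
sums. Every gap lies in `[1, |S|]`, so the `j`-th sum is at most `(∑_{d=1}^{|S|} f d)^k` with
`f d = 1/p + C √(log |S|) / (|S| √d)`, and `∑_{d ≤ N} 1/√d ≤ 2√N` bounds this base.
-/

open scoped Classical

/-- Extend a tuple `m : Fin k → ℕ` to indices `0, …, k+1` by `m_0 = 0` and `m_{k+1} = n`. -/
def extM (k n : ℕ) (m : Fin k → ℕ) : ℕ → ℕ := fun i =>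
  if h : 0 < i ∧ i ≤ k then m ⟨i - 1, by omega⟩ else if i = 0 then 0 else n

open Finset

theorem Fin.eq_of_sum_eq_of_comp_succAbove_eq {M : Type*} [AddCancelCommMonoid M] {k : ℕ}
    {v w : Fin (k + 1) → M} (j : Fin (k + 1)) (hsum : ∑ i, v i = ∑ i, w i)
    (h : v ∘ j.succAbove = w ∘ j.succAbove) : v = w := by
  rw [Fin.sum_univ_succAbove _ j, Fin.sum_univ_succAbove _ j] at hsum
  have hj : v j = w j := by
    simp only [← Function.comp_apply (f := v), ← Function.comp_apply (f := w), h] at hsum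
    exact add_right_cancel hsum
  funext i
  rcases j.eq_self_or_eq_succAbove i with rfl | ⟨i, rfl⟩
  · exact hj
  · exact congrFun h i

theorem Finset.prod_range_erase_eq_prod_succAbove {M : Type*} [CommMonoid M] {k : ℕ}
    (F : ℕ → M) (j : Fin (k + 1)) :
    ∏ i ∈ (range (k + 1)).erase j, F i = ∏ i : Fin k, F (j.succAbove i) := by
  symm
  refine prod_nbij (fun i => (j.succAbove i : ℕ)) (fun i _ => ?_) (fun a _ b _ h => ?_)
    (fun x hx => ?_) (fun _ _ => rfl)
  · simp [Fin.val_ne_iff, Fin.succAbove_ne, Fin.is_le]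
  · exact j.succAbove_right_injective (Fin.ext h)
  · simp only [coe_erase, coe_range, Set.mem_sdiff, Set.mem_Iio, Set.mem_singleton_iff] at hx
    obtain ⟨i, hi⟩ :=
      Fin.exists_succAbove_eq (x := ⟨x, hx.1⟩) (y := j) fun h => hx.2 (by simp [← h])
    exact ⟨i, by simp, by simp [hi]⟩

section ExtM

variable {k n : ℕ} {m : Fin k → ℕ}

@[simp] theorem extM_zero : extM k n m 0 = 0 := by simp [extM]

theorem extM_val_add_one (i : Fin k) : extM k n m (i + 1) = m i := by
  simp [extM]

theorem monotone_extM (hm : Monotone m) (hmn : ∀ i, m i ≤ n) : Monotone (extM k n m) := by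
  refine monotone_nat_of_le_succ fun i => ?_
  unfold extM
  split_ifs <;> first
    | exact hm (Fin.mk_le_mk.2 (by omega)) | exact hmn _ | exact Nat.zero_le _ | rfl
    | contradiction | omega

theorem extM_le (hmn : ∀ i, m i ≤ n) (i : ℕ) : extM k n m i ≤ n := by
  unfold extM
  split_ifs <;> simp [hmn]

theorem extM_lt_extM_succ (hm : StrictMono m) (h1 : ∀ i, 1 ≤ m i) (hn : ∀ i, m i < n)
    (hk : 0 < k) {i : ℕ} (hi : i ≤ k) : extM k n m i < extM k n m (i + 1) := by
  unfold extM
  split_ifs <;> first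
    | exact hm (Fin.mk_lt_mk.2 (by omega)) | exact h1 _ | exact hn _ | contradiction | omega

end ExtM

def gap (k n : ℕ) (m : Fin k → ℕ) (i : ℕ) : ℕ := extM k n m (i + 1) - extM k n m i

def increasingTuples (k n : ℕ) : Finset (Fin k → ℕ) :=
  (Fintype.piFinset fun _ : Fin k => Finset.Ico 1 n).filter (fun m => StrictMono m)

section Gaps

variable {k n : ℕ} {m : Fin k → ℕ}

theorem mem_increasingTuples :
    m ∈ increasingTuples k n ↔ StrictMono m ∧ ∀ i, 1 ≤ m i ∧ m i < n := by
  simp [increasingTuples, Fintype.mem_piFinset, and_comm]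

theorem gap_le (hmn : ∀ i, m i ≤ n) (i : ℕ) : gap k n m i ≤ n :=
  (Nat.sub_le _ _).trans (extM_le hmn _)

section Monotone

variable (hm : Monotone m) (hmn : ∀ i, m i ≤ n)
include hm hmn

theorem sum_range_gap (t : ℕ) : ∑ i ∈ range t, gap k n m i = extM k n m t := by
  simpa [gap] using sum_range_tsub (monotone_extM hm hmn) t

theorem sum_gap : ∑ i : Fin (k + 1), gap k n m i = n := by
  rw [Fin.sum_univ_eq_sum_range (gap k n m), sum_range_gap hm hmn]
  simp [extM]

theorem cast_extM_succ_sub (i : ℕ) :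
    ((extM k n m (i + 1) : ℕ) : ℝ) - extM k n m i = gap k n m i := by
  rw [gap, Nat.cast_sub (monotone_extM hm hmn i.le_succ)]

theorem eq_of_gap_eq {m' : Fin k → ℕ} (hm' : Monotone m') (hmn' : ∀ i, m' i ≤ n)
    (h : (fun i : Fin (k + 1) => gap k n m i) = fun i : Fin (k + 1) => gap k n m' i) : m = m' := by
  funext i
  rw [← extM_val_add_one (n := n) (m := m), ← extM_val_add_one (n := n) (m := m'),
    ← sum_range_gap hm hmn, ← sum_range_gap hm' hmn']
  refine sum_congr rfl fun x hx => congrFun h ⟨x, ?_⟩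
  have := mem_range.1 hx
  omega

end Monotone

theorem injOn_gap_succAbove (j : Fin (k + 1)) :
    Set.InjOn (fun m i => gap k n m (j.succAbove i)) (increasingTuples k n) := by
  intro m hm m' hm' h
  obtain ⟨hmono, hmn⟩ := mem_increasingTuples.1 hm
  obtain ⟨hmono', hmn'⟩ := mem_increasingTuples.1 hm'
  have hle : ∀ i, m i ≤ n := fun i => (hmn i).2.le
  have hle' : ∀ i, m' i ≤ n := fun i => (hmn' i).2.le
  refine eq_of_gap_eq hmono.monotone hle hmono'.monotone hle' ?_
  exact Fin.eq_of_sum_eq_of_comp_succAbove_eq (v := fun i => gap k n m i)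
    (w := fun i => gap k n m' i) j
    (by rw [sum_gap hmono.monotone hle, sum_gap hmono'.monotone hle']) h

theorem image_gap_succAbove_subset (j : Fin (k + 1)) :
    (increasingTuples k n).image (fun m i => gap k n m (j.succAbove i)) ⊆
      Fintype.piFinset fun _ => Icc 1 n := by
  intro g hg
  obtain ⟨m, hm, rfl⟩ := mem_image.1 hg
  obtain ⟨hmono, hmn⟩ := mem_increasingTuples.1 hm
  refine Fintype.mem_piFinset.2 fun i => mem_Icc.2 ⟨?_, gap_le (fun i => (hmn i).2.le) _⟩
  exact Nat.sub_pos_of_lt (extM_lt_extM_succ hmono (fun i => (hmn i).1) (fun i => (hmn i).2) i.pos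
    (Fin.is_le _))

theorem sum_prod_gap_succAbove_le {R : Type*} [CommSemiring R] [PartialOrder R] [IsOrderedRing R]
    {f : ℕ → R} (hf : ∀ d, 0 ≤ f d) (j : Fin (k + 1)) :
    ∑ m ∈ increasingTuples k n, ∏ i : Fin k, f (gap k n m (j.succAbove i)) ≤
      (∑ d ∈ Icc 1 n, f d) ^ k :=
  calc ∑ m ∈ increasingTuples k n, ∏ i : Fin k, f (gap k n m (j.succAbove i))
      = ∑ g ∈ (increasingTuples k n).image (fun m i => gap k n m (j.succAbove i)),
          ∏ i, f (g i) := (sum_image (f := fun g => ∏ i, f (g i)) (injOn_gap_succAbove j)).symm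
    _ ≤ ∑ g ∈ Fintype.piFinset fun _ => Icc 1 n, ∏ i, f (g i) :=
        sum_le_sum_of_subset_of_nonneg (image_gap_succAbove_subset j)
          fun _ _ _ => prod_nonneg fun _ _ => hf _
    _ = (∑ d ∈ Icc 1 n, f d) ^ k := (sum_pow' _ _ _).symm

end Gaps

theorem Real.one_div_sqrt_add_one_le {x : ℝ} (hx : 0 ≤ x) :
    1 / √(x + 1) ≤ 2 * (√(x + 1) - √x) := by
  have hpos : 0 < √(x + 1) := Real.sqrt_pos.2 (by linarith)
  have hsq : √(x + 1) ^ 2 = x + 1 := Real.sq_sqrt (by linarith)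
  have hsq' : √x ^ 2 = x := Real.sq_sqrt hx
  rw [div_le_iff₀ hpos]
  nlinarith [sq_nonneg (√(x + 1) - √x)]

theorem Real.sum_Icc_one_div_sqrt_le (n : ℕ) : ∑ d ∈ Icc 1 n, 1 / √d ≤ 2 * √n := by
  induction n with
  | zero => simp
  | succ n ih =>
    rw [sum_Icc_succ_top (by omega)]
    have := Real.one_div_sqrt_add_one_le n.cast_nonneg
    push_cast
    linarith

theorem Real.sum_Icc_add_div_mul_sqrt_le (a : ℝ) {b : ℝ} (hb : 0 ≤ b) (n : ℕ) :
    ∑ d ∈ Icc 1 n, (a + b / (n * √d)) ≤ n * a + 2 * b / √n :=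
  calc ∑ d ∈ Icc 1 n, (a + b / (n * √d))
      = n * a + b / n * ∑ d ∈ Icc 1 n, 1 / √d := by
        simp only [sum_add_distrib, sum_const, Nat.card_Icc, nsmul_eq_mul, mul_sum,
          div_mul_div_comm, mul_one, add_tsub_cancel_right]
    _ ≤ n * a + b / n * (2 * √n) := by
        gcongr
        exact Real.sum_Icc_one_div_sqrt_le n
    _ = n * a + 2 * b / √n := by
        rw [div_eq_mul_one_div (2 * b), ← Real.sqrt_div_self']
        ring

theorem stmt13_general (k : ℕ) (C : ℝ) (hC : 0 < C) (p : ℕ)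
    (S : Finset (ZMod p)) :
    ∑ m ∈ (Fintype.piFinset fun _ : Fin k => Finset.Ico 1 S.card).filter
        (fun m => StrictMono m),
      ∑ j ∈ Finset.range (k + 1), ∏ i ∈ (Finset.range (k + 1)).erase j,
        (1 / (p : ℝ) + C * Real.sqrt (Real.log S.card) /
          (S.card * Real.sqrt ((extM k S.card m (i + 1) : ℝ) - extM k S.card m i))) ≤
      (k + 1 : ℝ) * ((S.card : ℝ) / p +
        2 * C * Real.sqrt (Real.log S.card) / Real.sqrt S.card) ^ k := by
  set n := S.card
  set f : ℕ → ℝ := fun d => 1 / (p : ℝ) + C * √(Real.log n) / (n * √d)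
  have hf : ∀ d, 0 ≤ f d := fun d => by positivity
  have hsum : ∑ d ∈ Icc 1 n, f d ≤ n / p + 2 * C * √(Real.log n) / √n := by
    simpa only [mul_one_div, mul_assoc] using
      Real.sum_Icc_add_div_mul_sqrt_le (1 / p) (by positivity : 0 ≤ C * √(Real.log n)) n
  calc _ = ∑ m ∈ increasingTuples k n, ∑ j : Fin (k + 1),
        ∏ i : Fin k, f (gap k n m (j.succAbove i)) := by
        refine sum_congr rfl fun m hm => ?_
        obtain ⟨hmono, hmn⟩ := mem_increasingTuples.1 hm
        simp only [cast_extM_succ_sub hmono.monotone fun i => (hmn i).2.le, sum_range,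
          prod_range_erase_eq_prod_succAbove, f]
    _ = ∑ j : Fin (k + 1), ∑ m ∈ increasingTuples k n,
        ∏ i : Fin k, f (gap k n m (j.succAbove i)) := sum_comm
    _ ≤ ∑ _j : Fin (k + 1), (∑ d ∈ Icc 1 n, f d) ^ k :=
        sum_le_sum fun j _ => sum_prod_gap_succAbove_le hf j
    _ ≤ ∑ _j : Fin (k + 1), (n / p + 2 * C * √(Real.log n) / √n) ^ k := by
        gcongr
    _ = _ := by simp

theorem stmt13 (k : ℕ) (hk : 0 < k) (C : ℝ) (hC : 0 < C) (p : ℕ) [Fact p.Prime]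
    (S : Finset (ZMod p)) (hS : 2 ≤ S.card) :
    ∑ m ∈ (Fintype.piFinset fun _ : Fin k => Finset.Ico 1 S.card).filter
        (fun m => StrictMono m),
      ∑ j ∈ Finset.range (k + 1), ∏ i ∈ (Finset.range (k + 1)).erase j,
        (1 / (p : ℝ) + C * Real.sqrt (Real.log S.card) /
          (S.card * Real.sqrt ((extM k S.card m (i + 1) : ℝ) - extM k S.card m i))) ≤
      (k + 1 : ℝ) * ((S.card : ℝ) / p +
        2 * C * Real.sqrt (Real.log S.card) / Real.sqrt S.card) ^ k :=
  stmt13_general k C hC p S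
end

section
/- Let p be a prime and S ⊆ ℤ_p with |S| ≥ 2 and m ≤ |S|/4. Partition S randomly into m parts S_1, ..., S_m with sizes as equal as possible, and then independently select one uniformly random element X_i from each part S_i. Then the resulting set R = {X_1, ..., X_m} is distributed as a uniformly random subset of S of size m. -/
open scoped Classical

/-- `𝒮` is an ordered partition of `S` into `m` parts with sizes as equal as possible:
each part has size `⌊|S|/m⌋` or `⌊|S|/m⌋ + 1`, and exactly the first `|S| mod m` parts
(those with index `i < |S| mod m`) have the larger size. -/
def IsBalancedPartition {p : ℕ} (S : Finset (ZMod p)) (m : ℕ)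
    (𝒮 : Fin m → Finset (ZMod p)) : Prop :=
  (∀ i j : Fin m, i ≠ j → Disjoint (𝒮 i) (𝒮 j)) ∧
    S = Finset.univ.biUnion 𝒮 ∧
    ∀ i : Fin m, (𝒮 i).card = if (i : ℕ) < S.card % m then S.card / m + 1 else S.card / m

/-- The pairs `(𝒮, X)` of a balanced ordered partition `𝒮` of `S` into `m` parts together
with a transversal `X` selecting one element from each part. All such pairs are
equally likely in the two-step sampling procedure. -/
noncomputable def partitionTransversals (p : ℕ) [NeZero p] (S : Finset (ZMod p)) (m : ℕ) :
    Finset ((Fin m → Finset (ZMod p)) × (Fin m → ZMod p)) :=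
  Finset.univ.filter fun τ => IsBalancedPartition S m τ.1 ∧ ∀ i, τ.2 i ∈ τ.1 i

/-! All pairs `(𝒮, X)` are equally likely, so the claim is that every `m`-subset `R` of `S` is
the value set of the same number of pairs. A permutation of `ZMod p` stabilising `S` maps
balanced partitions with transversals to such pairs and the fibre over `R` into the fibre over
`σ R`; as these permutations act transitively on the `m`-subsets of `S`, all fibres have the
same size. They are nonempty because a balanced partition exists (split an enumeration of `S`
by residues mod `m`). -/

open Finset

theorem Equiv.Perm.exists_map_eq_of_subset {α : Type*} [Fintype α] [DecidableEq α]
    {S R R' : Finset α} (hR : R ⊆ S) (hR' : R' ⊆ S) (hcard : #R = #R') :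
    ∃ σ : Equiv.Perm α, S.map σ.toEmbedding = S ∧ R.map σ.toEmbedding = R' := by
  have card_subtype_of_subset {T : Finset α} (hT : T ⊆ S) : #(T.subtype (· ∈ S)) = #T := by
    rw [card_subtype, filter_true_of_mem hT]
  obtain ⟨σ, hσ⟩ := Equiv.Perm.exists_map_finset_eq (R.subtype (· ∈ S)) (R'.subtype (· ∈ S))
    (by rw [card_subtype_of_subset hR, card_subtype_of_subset hR', hcard])
  refine ⟨Equiv.Perm.ofSubtype σ, ?_, ?_⟩
  · refine eq_of_subset_of_card_le (fun y hy => ?_) (card_map _).ge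
    obtain ⟨x, hx, rfl⟩ := mem_map.1 hy
    simp [Equiv.Perm.ofSubtype_apply_of_mem σ hx]
  · refine eq_of_subset_of_card_le (fun y hy => ?_) (by rw [card_map, hcard])
    obtain ⟨x, hx, rfl⟩ := mem_map.1 hy
    have hσx : σ ⟨x, hR hx⟩ ∈ R'.subtype (· ∈ S) :=
      hσ ▸ mem_map_of_mem _ (by simpa using hx)
    simpa [Equiv.Perm.ofSubtype_apply_of_mem σ (hR hx)] using hσx

lemma Fin.card_filter_modEq {n m : ℕ} (hm : 0 < m) (i : ℕ) :
    #{k : Fin n | (k : ℕ) ≡ i [MOD m]} = n / m + if i % m < n % m then 1 else 0 := by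
  rw [← Nat.count_modEq_card n hm, Nat.count_eq_card_filter_range]
  refine card_nbij Fin.val (fun k _ => by simp_all) Fin.val_injective.injOn fun k hk => ?_
  simp only [coe_filter, mem_range] at hk
  exact ⟨⟨k, hk.1⟩, by simpa using hk.2, rfl⟩

noncomputable def transversalFiber (p : ℕ) [NeZero p] (S : Finset (ZMod p)) (m : ℕ)
    (R : Finset (ZMod p)) : Finset ((Fin m → Finset (ZMod p)) × (Fin m → ZMod p)) :=
  (partitionTransversals p S m).filter fun τ => image τ.2 univ = R

def relabel {p m : ℕ} (σ : Equiv.Perm (ZMod p))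
    (τ : (Fin m → Finset (ZMod p)) × (Fin m → ZMod p)) :
    (Fin m → Finset (ZMod p)) × (Fin m → ZMod p) :=
  (fun i => (τ.1 i).map σ.toEmbedding, σ ∘ τ.2)

section PartitionTransversals

variable {p : ℕ} {S : Finset (ZMod p)} {m : ℕ}

lemma IsBalancedPartition.subset {𝒮 : Fin m → Finset (ZMod p)}
    (h : IsBalancedPartition S m 𝒮) (i : Fin m) : 𝒮 i ⊆ S :=
  h.2.1 ▸ subset_biUnion_of_mem 𝒮 (mem_univ i)

lemma relabel_injective (σ : Equiv.Perm (ZMod p)) :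
    Function.Injective (relabel (m := m) σ) := by
  rintro ⟨𝒮, X⟩ ⟨𝒮', X'⟩ h
  simp only [relabel, Prod.mk.injEq] at h
  refine Prod.ext (funext fun i => ?_) (funext fun i => σ.injective (congrFun h.2 i))
  exact map_injective σ.toEmbedding (congrFun h.1 i)

lemma image_relabel (σ : Equiv.Perm (ZMod p))
    (τ : (Fin m → Finset (ZMod p)) × (Fin m → ZMod p)) :
    image (relabel σ τ).2 univ = (image τ.2 univ).map σ.toEmbedding := by
  simp [relabel, map_eq_image, image_image]

variable [NeZero p]

lemma mem_partitionTransversals {τ : (Fin m → Finset (ZMod p)) × (Fin m → ZMod p)} :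
    τ ∈ partitionTransversals p S m ↔ IsBalancedPartition S m τ.1 ∧ ∀ i, τ.2 i ∈ τ.1 i := by
  simp [partitionTransversals]

/-- Part `i` consists of the elements whose index in an enumeration of `S` is `≡ i` mod `m`,
and its transversal element is the one with index `i`. -/
lemma partitionTransversals_nonempty (hm : 0 < m) (hmS : m ≤ #S) :
    (partitionTransversals p S m).Nonempty := by
  let e : Fin #S ↪ ZMod p := S.equivFin.symm.toEmbedding.trans (Function.Embedding.subtype _)
  have he : ∀ k, e k ∈ S := fun k => (S.equivFin.symm k).2
  have he_surj : ∀ x ∈ S, ∃ k, e k = x := fun x hx => ⟨S.equivFin ⟨x, hx⟩, by simp [e]⟩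
  let part (i : Fin m) : Finset (ZMod p) :=
    (univ.filter fun k : Fin #S => (k : ℕ) ≡ i [MOD m]).map e
  refine ⟨(part, fun i => e ⟨i, i.2.trans_le hmS⟩), mem_partitionTransversals.2
    ⟨⟨fun i j hij => ?_, ?_, fun i => ?_⟩, fun i => ?_⟩⟩
  · refine (disjoint_map e).2 (disjoint_filter.2 fun k _ hki hkj => hij (Fin.ext ?_))
    simpa [Nat.ModEq, Nat.mod_eq_of_lt i.2, Nat.mod_eq_of_lt j.2] using hki.symm.trans hkj
  · ext x
    simp only [part, mem_biUnion, mem_univ, true_and, mem_map, mem_filter]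
    refine ⟨fun hx => ?_, fun ⟨_, k, _, hk⟩ => hk ▸ he k⟩
    obtain ⟨k, rfl⟩ := he_surj x hx
    exact ⟨⟨k % m, Nat.mod_lt _ hm⟩, k, Nat.mod_modEq _ _ |>.symm, rfl⟩
  · simp only [part, card_map, Fin.card_filter_modEq hm, Nat.mod_eq_of_lt i.2]
    split_ifs <;> rfl
  · exact mem_map_of_mem e (by simp [Nat.ModEq.refl])

lemma relabel_mem_partitionTransversals {σ : Equiv.Perm (ZMod p)}
    (hσ : S.map σ.toEmbedding = S) {τ : (Fin m → Finset (ZMod p)) × (Fin m → ZMod p)}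
    (hτ : τ ∈ partitionTransversals p S m) : relabel σ τ ∈ partitionTransversals p S m := by
  obtain ⟨⟨hdisj, hunion, hcard⟩, htrans⟩ := mem_partitionTransversals.1 hτ
  refine mem_partitionTransversals.2 ⟨⟨fun i j hij => ?_, ?_, fun i => ?_⟩, fun i => ?_⟩
  · exact (disjoint_map _).2 (hdisj i j hij)
  · rw [map_eq_image] at hσ
    simp only [relabel, map_eq_image, ← biUnion_image, ← hunion, hσ]
  · simp only [relabel, card_map, hcard i]
  · exact mem_map_of_mem _ (htrans i)

lemma card_transversalFiber_le_map {σ : Equiv.Perm (ZMod p)} (hσ : S.map σ.toEmbedding = S)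
    (R : Finset (ZMod p)) :
    #(transversalFiber p S m R) ≤ #(transversalFiber p S m (R.map σ.toEmbedding)) := by
  refine card_le_card_of_injOn (relabel σ) (fun τ hτ => ?_) (relabel_injective σ).injOn
  simp only [transversalFiber, coe_filter, Set.mem_ofPred_eq] at hτ ⊢
  exact ⟨relabel_mem_partitionTransversals hσ hτ.1, by rw [image_relabel, hτ.2]⟩

lemma card_transversalFiber_eq {R R' : Finset (ZMod p)} (hR : R ⊆ S) (hR' : R' ⊆ S)
    (hcard : #R = #R') : #(transversalFiber p S m R) = #(transversalFiber p S m R') := by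
  obtain ⟨σ, hσS, hσR⟩ := Equiv.Perm.exists_map_eq_of_subset hR hR' hcard
  obtain ⟨σ', hσ'S, hσ'R⟩ := Equiv.Perm.exists_map_eq_of_subset hR' hR hcard.symm
  exact le_antisymm (hσR ▸ card_transversalFiber_le_map hσS R)
    (hσ'R ▸ card_transversalFiber_le_map hσ'S R')

lemma image_mem_powersetCard_of_mem_partitionTransversals
    {τ : (Fin m → Finset (ZMod p)) × (Fin m → ZMod p)} (hτ : τ ∈ partitionTransversals p S m) :
    image τ.2 univ ∈ S.powersetCard m := by
  obtain ⟨hbal, htrans⟩ := mem_partitionTransversals.1 hτ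
  have hinj : Function.Injective τ.2 := fun i j hij => by_contra fun h =>
    disjoint_left.1 (hbal.1 i j h) (htrans i) (hij ▸ htrans j)
  refine mem_powersetCard.2 ⟨fun x hx => ?_, by simp [card_image_of_injective _ hinj]⟩
  obtain ⟨i, -, rfl⟩ := mem_image.1 hx
  exact hbal.subset i (htrans i)

lemma card_partitionTransversals {R : Finset (ZMod p)} (hRS : R ⊆ S) (hR : #R = m) :
    #(partitionTransversals p S m) = (#S).choose m * #(transversalFiber p S m R) := by
  rw [card_eq_sum_card_fiberwise fun _ => image_mem_powersetCard_of_mem_partitionTransversals,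
    ← card_powersetCard, ← smul_eq_mul, ← sum_const]
  refine sum_congr rfl fun R' hR' => ?_
  obtain ⟨hR'S, hR'⟩ := mem_powersetCard.1 hR'
  exact card_transversalFiber_eq hR'S hRS (hR'.trans hR.symm)

end PartitionTransversals

theorem stmt18_general (p : ℕ) [Fact p.Prime] (S : Finset (ZMod p))
    (m : ℕ) (hm : 0 < m) (hm4 : 4 * m ≤ S.card) (R : Finset (ZMod p))
    (hRS : R ⊆ S) (hR : R.card = m) :
    (((partitionTransversals p S m).filter fun τ =>
        Finset.image τ.2 Finset.univ = R).card : ℝ) /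
      ((partitionTransversals p S m).card : ℝ) = 1 / (S.card.choose m : ℝ) := by
  have htotal := card_partitionTransversals (p := p) hRS hR
  have hfiber : 0 < #(transversalFiber p S m R) :=
    Nat.pos_of_mul_pos_left <|
      htotal ▸ (partitionTransversals_nonempty hm (by omega : m ≤ #S)).card_pos
  change (#(transversalFiber p S m R) : ℝ) / _ = _
  rw [htotal, Nat.cast_mul, div_mul_cancel_right₀ (by exact_mod_cast hfiber.ne'), one_div]

theorem stmt18 (p : ℕ) [Fact p.Prime] (S : Finset (ZMod p)) (hS : 2 ≤ S.card)
    (m : ℕ) (hm : 0 < m) (hm4 : 4 * m ≤ S.card) (R : Finset (ZMod p))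
    (hRS : R ⊆ S) (hR : R.card = m) :
    (((partitionTransversals p S m).filter fun τ =>
        Finset.image τ.2 Finset.univ = R).card : ℝ) /
      ((partitionTransversals p S m).card : ℝ) = 1 / (S.card.choose m : ℝ) :=
  stmt18_general p S m hm hm4 R hRS hR
end
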